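/- arXiv:2008.07797 — 3 statements merged into one kernel-verified Lean document; each statement's English description precedes it below -/
import Mathlib

section
/- Let N be a rooted phylogenetic network on a finite set X and let Ñ be its normalisation. For every vertex v of Ñ, the cluster of v in Ñ equals the cluster of v in N: C_Ñ(v) = C_N(v). -/
/-!
Formalisation framework for rooted phylogenetic networks.

A network is represented as a directed graph on an ambient vertex type `V`:
a vertex set `verts`, a root vertex `root`, and an arc relation `arc`.
-/

structure Net (V : Type*) where
  verts : Set V
  root : V
  arc : V → V → Prop

namespace Net

variable {V : Type*} {W : Type*}

/-- `N.reach u v` means there is a (possibly empty) directed path from `u` to `v`. -/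
def reach (N : Net V) : V → V → Prop := Relation.ReflTransGen N.arc

/-- The in-degree of a vertex. -/
noncomputable def inDeg (N : Net V) (v : V) : ℕ := {u | N.arc u v}.ncard

/-- The out-degree of a vertex. -/
noncomputable def outDeg (N : Net V) (v : V) : ℕ := {w | N.arc v w}.ncard

/-- The leaves of `N`: the vertices of out-degree 0. -/
def leaves (N : Net V) : Set V := {v ∈ N.verts | N.outDeg v = 0}

/-- `N.IsPathFrom u v l` : the list `l` is a directed path in `N` from `u` to `v`
(consecutive entries joined by arcs; a one-element list is the empty path). -/
def IsPathFrom (N : Net V) (u v : V) (l : List V) : Prop :=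
  l.Chain' N.arc ∧ l.head? = some u ∧ l.getLast? = some v

/-- A vertex is visible if some leaf is such that every directed path from the
root to that leaf passes through the vertex. -/
def Visible (N : Net V) (x : V) : Prop :=
  x ∈ N.verts ∧ ∃ y ∈ N.leaves, ∀ l : List V, N.IsPathFrom N.root y l → x ∈ l

/-- A subdividing vertex is one of in-degree 1 and out-degree 1. -/
def Subdividing (N : Net V) (v : V) : Prop := N.inDeg v = 1 ∧ N.outDeg v = 1

/-- The digraph `Cov(N)` on the visible vertices of `N`: an arc `(u,v)` whenever
`u ≠ v`, `u →_N v`, and no visible vertex lies strictly between `u` and `v`. -/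
def cov (N : Net V) : Net V where
  verts := {v | N.Visible v}
  root := N.root
  arc u v := N.Visible u ∧ N.Visible v ∧ u ≠ v ∧ N.reach u v ∧
    ¬ ∃ w, N.Visible w ∧ w ≠ u ∧ w ≠ v ∧ N.reach u w ∧ N.reach w v

/-- The normalisation `Ñ` of `N`: obtained from `Cov(N)` by suppressing every
subdividing vertex.  Its vertices are the visible vertices of `N` that are not
subdividing in `Cov(N)`, with an arc `(u,v)` whenever `Cov(N)` has a directed path
from `u` to `v` (of length at least one) all of whose interior vertices are
subdividing in `Cov(N)`. -/
def normalise (N : Net V) : Net V where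
  verts := {v | N.Visible v ∧ ¬ N.cov.Subdividing v}
  root := N.root
  arc u v := (N.Visible u ∧ ¬ N.cov.Subdividing u) ∧ (N.Visible v ∧ ¬ N.cov.Subdividing v) ∧
    ∃ l : List V, N.cov.IsPathFrom u v l ∧ 2 ≤ l.length ∧
      ∀ w ∈ l.tail.dropLast, N.cov.Subdividing w

/-- `N` is a rooted phylogenetic network on the finite nonempty leaf set `X`. -/
structure IsPhylo (N : Net V) (X : Set V) : Prop where
  finite : N.verts.Finite
  nonempty : X.Nonempty
  arc_mem : ∀ ⦃u v : V⦄, N.arc u v → u ∈ N.verts ∧ v ∈ N.verts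
  acyclic : ∀ ⦃u v : V⦄, N.arc u v → ¬ N.reach v u
  root_mem : N.root ∈ N.verts
  root_inDeg : N.inDeg N.root = 0
  root_unique : ∀ v ∈ N.verts, N.inDeg v = 0 → v = N.root
  leaves_eq : N.leaves = X
  leaf_inDeg : ∀ x ∈ X, N.inDeg x = 1
  interior_deg : ∀ v ∈ N.verts, v ≠ N.root → v ∉ X →
    (N.inDeg v = 1 ∧ 2 ≤ N.outDeg v) ∨ (N.outDeg v = 1 ∧ 2 ≤ N.inDeg v)

/-- `N` has no shortcuts: no arc `(u,v)` such that there is also a directed path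
from `u` to `v` of length at least 2 (i.e. a path-list with at least 3 entries). -/
def NoShortcuts (N : Net V) : Prop :=
  ∀ u v : V, N.arc u v → ¬ ∃ l : List V, N.IsPathFrom u v l ∧ 3 ≤ l.length

/-- Tree-child: every vertex is visible. -/
def TreeChild (N : Net V) : Prop := ∀ v ∈ N.verts, N.Visible v

/-- Normal: tree-child with no shortcuts. -/
def Normal (N : Net V) : Prop := N.TreeChild ∧ N.NoShortcuts

/-- A tree: every vertex has in-degree at most 1. -/
def IsTree (N : Net V) : Prop := ∀ v ∈ N.verts, N.inDeg v ≤ 1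

/-- The cluster of `v`: the set of leaves reachable from `v`. -/
def cluster (N : Net V) (v : V) : Set V := {x ∈ N.leaves | N.reach v x}

/-- The identifying set of `v`: the set of leaves `x` such that every directed
path from the root to `x` passes through `v`. -/
def ident (N : Net V) (v : V) : Set V :=
  {x ∈ N.leaves | ∀ l : List V, N.IsPathFrom N.root x l → v ∈ l}

/-- A digraph isomorphism between two networks, given by the map `f`. -/
def NetEquiv (M : Net V) (M' : Net W) (f : V → W) : Prop :=
  Set.BijOn f M.verts M'.verts ∧
    ∀ u ∈ M.verts, ∀ v ∈ M.verts, (M.arc u v ↔ M'.arc (f u) (f v))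

/-- Two networks over the same ambient type are equivalent relative to a leaf set
`X` if there is a digraph isomorphism between them fixing each element of `X`. -/
def EquivOn (M M' : Net V) (X : Set V) : Prop :=
  ∃ f : V → V, NetEquiv M M' f ∧ ∀ x ∈ X, f x = x

/-- `N₁ ⊕ N₂` : disjoint copies of `N₁` and `N₂` under a new root (`none`). -/
def oplus {V₁ V₂ : Type*} (N₁ : Net V₁) (N₂ : Net V₂) : Net (Option (V₁ ⊕ V₂)) where
  verts := insert none
    ((fun v => some (Sum.inl v)) '' N₁.verts ∪ (fun v => some (Sum.inr v)) '' N₂.verts)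
  root := none
  arc a b :=
    match a, b with
    | none, some (Sum.inl w) => w = N₁.root
    | none, some (Sum.inr w) => w = N₂.root
    | some (Sum.inl u), some (Sum.inl w) => N₁.arc u w
    | some (Sum.inr u), some (Sum.inr w) => N₂.arc u w
    | _, _ => False

/-- `N₁ ⊗ N₂` : identify each leaf `x` of `N₁` with the root of its own copy of `N₂`;
the copy of a non-leaf vertex `u` of `N₁` is `Sum.inl u`, and the vertex `w` of the
copy of `N₂` attached at leaf `x` of `N₁` is `Sum.inr (x, w)`. -/
def otimes {V₁ V₂ : Type*} (N₁ : Net V₁) (N₂ : Net V₂) : Net (V₁ ⊕ V₁ × V₂) where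
  verts := Sum.inl '' (N₁.verts \ N₁.leaves) ∪ Sum.inr '' (N₁.leaves ×ˢ N₂.verts)
  root := Sum.inl N₁.root
  arc a b :=
    match a, b with
    | Sum.inl u, Sum.inl w => N₁.arc u w ∧ w ∉ N₁.leaves
    | Sum.inl u, Sum.inr (x, w) => x ∈ N₁.leaves ∧ N₁.arc u x ∧ w = N₂.root
    | Sum.inr (x, w), Sum.inr (x', w') => x = x' ∧ x ∈ N₁.leaves ∧ N₂.arc w w'
    | _, _ => False

end Net

/-- A hierarchy: a collection of sets any two of which are disjoint or nested. -/
def IsHierarchy {V : Type*} (C : Set (Set V)) : Prop :=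
  ∀ A ∈ C, ∀ B ∈ C, A ∩ B = ∅ ∨ A ⊆ B ∨ B ⊆ A

/-!
Arcs of `Ñ` are paths of `Cov(N)`, whose arcs are paths of `N`; so `Ñ`-reachability implies
`N`-reachability. Conversely, if `u →_N x` with `u`, `x` visible, the visible vertex strictly
below `u` and above `x` with the most descendants is a `Cov(N)`-child of `u`, and iterating gives a
`Cov(N)`-path from `u` to `x`; cut at its non-subdividing vertices it becomes an `Ñ`-path. Leaves
are visible and not subdividing, and every vertex reaches a leaf, so `Ñ` and `N` have the same
leaves and hence the same clusters.
-/

namespace Net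

variable {V : Type*}

theorem IsPathFrom.reach {M : Net V} {u v : V} {l : List V} (h : M.IsPathFrom u v l) :
    M.reach u v := by
  obtain ⟨hchain, hhead, hlast⟩ := h
  have hne : l ≠ [] := by rintro rfl; simp at hhead
  rw [List.head?_eq_some_head hne, Option.some_inj] at hhead
  rw [List.getLast?_eq_some_getLast hne, Option.some_inj] at hlast
  exact hhead ▸ hlast ▸ List.relationReflTransGen_of_exists_isChain l hchain hne

theorem outDeg_eq_zero_iff {M : Net V} {v : V} (hfin : {w | M.arc v w}.Finite) :
    M.outDeg v = 0 ↔ ∀ w, ¬ M.arc v w := by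
  rw [outDeg, Set.ncard_eq_zero hfin, Set.eq_empty_iff_forall_notMem]
  rfl

theorem visible_of_mem_leaves {N : Net V} {x : V} (hx : x ∈ N.leaves) : N.Visible x :=
  ⟨hx.1, x, hx, fun _ hl => List.mem_of_getLast? hl.2.2⟩

section Normalise

variable {N : Net V} {u x : V}

theorem reach_of_cov_reach (h : N.cov.reach u x) : N.reach u x :=
  Relation.reflTransGen_closed (fun _ _ hab => hab.2.2.2.1) _ _ h

theorem reach_of_normalise_reach (h : N.normalise.reach u x) : N.reach u x :=
  Relation.reflTransGen_closed
    (fun _ _ ⟨_, _, _, hl, _⟩ => reach_of_cov_reach hl.reach) _ _ h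

theorem exists_cov_arc_of_normalise_arc (h : N.normalise.arc u x) : ∃ w, N.cov.arc u w := by
  obtain ⟨-, -, l, ⟨hchain, hhead, -⟩, hlen, -⟩ := h
  match l, hchain, hhead, hlen with
  | _ :: w :: _, hchain, hhead, _ =>
    exact ⟨w, by simpa [← Option.some_inj.mp hhead] using hchain.rel⟩

theorem normalise_arc_of_isChain {s : List V} (hu : u ∈ N.normalise.verts)
    (hx : x ∈ N.normalise.verts) (hs : ∀ w ∈ s, N.cov.Subdividing w)
    (hchain : (u :: s ++ [x]).IsChain N.cov.arc) : N.normalise.arc u x :=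
  ⟨hu, hx, u :: s ++ [x], ⟨hchain, rfl, List.getLast?_concat⟩, by simp, by simpa using hs⟩

theorem normalise_reach_of_cov_reach (hu : u ∈ N.normalise.verts) (hx : x ∈ N.normalise.verts)
    (h : N.cov.reach u x) : N.normalise.reach u x := by
  suffices key : ∀ a, N.cov.reach a x → ∀ u ∈ N.normalise.verts, ∀ s : List V,
      (∀ w ∈ s, N.cov.Subdividing w) → (u :: s ++ [a]).IsChain N.cov.arc →
      N.normalise.reach u x by
    rcases Relation.ReflTransGen.cases_head h with rfl | ⟨a, hua, hax⟩
    · exact Relation.ReflTransGen.refl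
    · exact key a hax u hu [] (by simp) (by simpa using hua)
  intro a ha
  induction ha using Relation.ReflTransGen.head_induction_on with
  | refl =>
    exact fun u hu s hs hchain =>
      Relation.ReflTransGen.single (normalise_arc_of_isChain hu hx hs hchain)
  | @head a b hab _ ih =>
    intro u hu s hs hchain
    by_cases ha : N.cov.Subdividing a
    · exact ih u hu (s ++ [a])
        (fun w hw => (List.mem_append.mp hw).elim (hs w) fun h => List.eq_of_mem_singleton h ▸ ha)
        (hchain.append (List.isChain_singleton _) (by rw [List.getLast?_concat]; simpa using hab))
    · exact Relation.ReflTransGen.head (normalise_arc_of_isChain hu ⟨hab.1, ha⟩ hs hchain)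
        (ih a ⟨hab.1, ha⟩ [] (by simp) (by simpa using hab))

end Normalise

namespace IsPhylo

variable {N : Net V} {X : Set V} (hN : N.IsPhylo X)
include hN

theorem reach_antisymm {u v : V} (huv : N.reach u v) (hvu : N.reach v u) : u = v := by
  rcases huv.cases_head with rfl | ⟨w, huw, hwv⟩
  · rfl
  · exact absurd (hwv.trans hvu) (hN.acyclic huw)

theorem finite_setOf_reach (u : V) : {w | N.reach u w}.Finite := by
  refine (hN.finite.insert u).subset fun w huw => ?_
  rcases huw.cases_tail with rfl | ⟨_, _, hw⟩
  · exact Set.mem_insert _ _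
  · exact Set.mem_insert_of_mem _ (hN.arc_mem hw).2

theorem ncard_setOf_reach_lt {u w : V} (huw : N.reach u w) (hne : u ≠ w) :
    {y | N.reach w y}.ncard < {y | N.reach u y}.ncard := by
  refine Set.ncard_lt_ncard ⟨fun y hwy => huw.trans hwy, fun hsub => hne ?_⟩
    (hN.finite_setOf_reach u)
  exact hN.reach_antisymm huw (hsub Relation.ReflTransGen.refl)

theorem cov_reach_of_reach {u x : V} (hu : N.Visible u) (hx : N.Visible x) (h : N.reach u x) :
    N.cov.reach u x := by
  induction u using (measure fun u => {w | N.reach u w}.ncard).wf.induction with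
  | h u ih =>
  by_cases hux : u = x
  · exact hux ▸ Relation.ReflTransGen.refl
  obtain ⟨w, ⟨hw, hwu, huw, hwx⟩, hmax⟩ :=
    Set.exists_max_image {w | N.Visible w ∧ w ≠ u ∧ N.reach u w ∧ N.reach w x}
      (fun w => {y | N.reach w y}.ncard)
      ((hN.finite_setOf_reach u).subset fun _ hw => hw.2.2.1)
      ⟨x, hx, Ne.symm hux, h, Relation.ReflTransGen.refl⟩
  refine Relation.ReflTransGen.head ⟨hu, hw, Ne.symm hwu, huw, ?_⟩
    (ih w (hN.ncard_setOf_reach_lt huw (Ne.symm hwu)) hw hwx)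
  rintro ⟨v, hv, hvu, hvw, huv, hvw'⟩
  exact (hmax v ⟨hv, hvu, huv, hvw'.trans hwx⟩).not_gt (hN.ncard_setOf_reach_lt hvw' hvw)

theorem exists_mem_leaves_reach {v : V} (hv : v ∈ N.verts) : ∃ x ∈ N.leaves, N.reach v x := by
  induction v using (measure fun v => {w | N.reach v w}.ncard).wf.induction with
  | h v ih =>
  by_cases hdeg : N.outDeg v = 0
  · exact ⟨v, ⟨hv, hdeg⟩, Relation.ReflTransGen.refl⟩
  obtain ⟨w, hvw⟩ := Set.nonempty_of_ncard_ne_zero hdeg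
  have hne : v ≠ w := fun h => hN.acyclic hvw (h ▸ Relation.ReflTransGen.refl)
  obtain ⟨x, hx, hwx⟩ := ih w (hN.ncard_setOf_reach_lt (Relation.ReflTransGen.single hvw) hne)
    (hN.arc_mem hvw).2
  exact ⟨x, hx, hwx.head hvw⟩

theorem eq_of_reach_of_mem_leaves {x w : V} (hx : x ∈ N.leaves) (h : N.reach x w) : w = x := by
  rcases h.cases_head with rfl | ⟨y, hxy, -⟩
  · rfl
  · exact absurd hxy ((outDeg_eq_zero_iff
      (hN.finite.subset fun _ hy => (hN.arc_mem hy).2)).mp hx.2 y)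

theorem not_cov_arc_of_mem_leaves {x w : V} (hx : x ∈ N.leaves) : ¬ N.cov.arc x w :=
  fun h => h.2.2.1 (hN.eq_of_reach_of_mem_leaves hx h.2.2.2.1).symm

theorem mem_normalise_verts_of_mem_leaves {x : V} (hx : x ∈ N.leaves) :
    x ∈ N.normalise.verts := by
  refine ⟨visible_of_mem_leaves hx, fun hsub => ?_⟩
  have : N.cov.outDeg x = 0 := by
    simp [outDeg, hN.not_cov_arc_of_mem_leaves hx]
  exact absurd hsub.2 (by omega)

theorem normalise_reach_iff {u x : V} (hu : u ∈ N.normalise.verts)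
    (hx : x ∈ N.normalise.verts) : N.normalise.reach u x ↔ N.reach u x :=
  ⟨reach_of_normalise_reach,
    fun h => normalise_reach_of_cov_reach hu hx (hN.cov_reach_of_reach hu.1 hx.1 h)⟩

theorem normalise_leaves : N.normalise.leaves = N.leaves := by
  have hfin : ∀ v, {w | N.normalise.arc v w}.Finite :=
    fun v => hN.finite.subset fun _ hw => hw.2.1.1.1
  ext v
  refine ⟨fun ⟨hv, hdeg⟩ => ?_, fun hv => ⟨hN.mem_normalise_verts_of_mem_leaves hv, ?_⟩⟩
  · obtain ⟨x, hx, hvx⟩ := hN.exists_mem_leaves_reach hv.1.1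
    obtain rfl | ⟨w, hvw, -⟩ := ((hN.normalise_reach_iff hv
      (hN.mem_normalise_verts_of_mem_leaves hx)).mpr hvx).cases_head
    · exact hx
    · exact absurd hvw ((outDeg_eq_zero_iff (hfin v)).mp hdeg w)
  · refine (outDeg_eq_zero_iff (hfin v)).mpr fun w hvw => ?_
    obtain ⟨y, hvy⟩ := exists_cov_arc_of_normalise_arc hvw
    exact hN.not_cov_arc_of_mem_leaves hv hvy

end IsPhylo

end Net

/-- For every vertex `v` of the normalisation `Ñ`, the cluster of `v`
in `Ñ` equals the cluster of `v` in `N`. -/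
theorem stmt10 {V : Type*} (N : Net V) (X : Set V) (hN : N.IsPhylo X) :
    ∀ v ∈ N.normalise.verts, N.normalise.cluster v = N.cluster v := by
  intro v hv
  ext x
  rw [Net.cluster, Net.cluster, hN.normalise_leaves]
  exact and_congr_right fun hx =>
    hN.normalise_reach_iff hv (hN.mem_normalise_verts_of_mem_leaves hx)
end

section
/- Let M be a normal network on a finite set X. Then M is a tree (every vertex has in-degree at most 1) if and only if the collection of clusters {C_M(v) : v a vertex of M} forms a hierarchy on X. -/
/-!
In a tree two ancestors of a common vertex are comparable, so two clusters that share a leaf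
are nested. Conversely, let `v` have two parents `p ≠ q`. A leaf below `v` lies in both
clusters, so in a hierarchy, say, `C(p) ⊆ C(q)`. The leaf witnessing the visibility of `p`
then lies below `q`, so the path from the root through `q` to it passes through `p`, and `p`,
`q` are comparable. A path from one parent to the other followed by the arc into `v` is a
shortcut for the arc from the first parent into `v`.
-/

theorem Relation.exists_reflTransGen_forall_not_of_finite {α : Type*} {r : α → α → Prop}
    {s : Set α} (hs : s.Finite) (hr : ∀ ⦃a b⦄, r a b → b ∈ s)
    (hirr : ∀ a, ¬ TransGen r a a) {a : α} (ha : a ∈ s) :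
    ∃ b ∈ s, ReflTransGen r a b ∧ ∀ c, ¬ r b c := by
  have : IsStrictOrder α (flip (TransGen r)) :=
    { irrefl := hirr, trans := fun _ _ _ hab hbc => hbc.trans hab }
  obtain ⟨b, ⟨hbs, hab⟩, hmin⟩ := (Set.wellFoundedOn_iff.mp
    ((hs.subset (Set.sep_subset _ _)).wellFoundedOn (r := flip (TransGen r)))).has_min
    {b ∈ s | ReflTransGen r a b} ⟨a, ha, .refl⟩
  exact ⟨b, hbs, hab, fun c hbc =>
    hmin c ⟨hr hbc, hab.tail hbc⟩ ⟨.single hbc, ⟨hr hbc, hab.tail hbc⟩, hbs, hab⟩⟩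

namespace Net

variable {V : Type*} {M : Net V} {X : Set V} {u v w p q : V} {l : List V}

namespace IsPathFrom

lemma reach_of_mem (h : M.IsPathFrom u w l) (hv : v ∈ l) : M.reach u v ∧ M.reach v w := by
  obtain ⟨hc, hh, hl⟩ := h
  have hne : l ≠ [] := by rintro rfl; simp at hh
  rw [List.head?_eq_some_head hne, Option.some.injEq] at hh
  rw [List.getLast?_eq_some_getLast hne, Option.some.injEq] at hl
  exact ⟨hc.induction (M.reach u ·) l (fun _ _ hab h => h.tail hab) (fun _ => hh ▸ .refl) v hv,
    hc.backwards_induction (M.reach · w) l (fun _ _ hab h => h.head hab)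
      (fun _ => hl ▸ .refl) v hv⟩

lemma append_tail {l' : List V} (h : M.IsPathFrom u v l) (h' : M.IsPathFrom v w l') :
    M.IsPathFrom u w (l ++ l'.tail) := by
  obtain ⟨hc, hh, hl⟩ := h
  obtain ⟨hc', hh', hl'⟩ := h'
  obtain _ | ⟨v', t⟩ := l'
  · simp at hh'
  obtain rfl : v' = v := by simpa using hh'
  have hne : l ≠ [] := by rintro rfl; simp at hh
  refine ⟨hc.append hc'.tail ?_, by rwa [List.head?_append_of_ne_nil _ hne], ?_⟩
  · rw [hl]
    simpa using (List.isChain_cons.mp hc').1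
  · rw [List.getLast?_cons] at hl'
    cases ht : t.getLast? <;> simp_all [List.getLast?_append]

lemma two_le_length (h : M.IsPathFrom u v l) (huv : u ≠ v) : 2 ≤ l.length := by
  obtain ⟨-, hh, hl⟩ := h
  match l, hh, hl with
  | [_], hh, hl => simp_all
  | _ :: _ :: _, _, _ => simp

end IsPathFrom

lemma exists_isPathFrom_of_reach (h : M.reach u v) : ∃ l, M.IsPathFrom u v l := by
  obtain ⟨l, hne, hc, hh, hl⟩ := List.exists_isChain_ne_nil_of_relationReflTransGen h
  exact ⟨l, hc, hh ▸ List.head?_eq_some_head hne, hl ▸ List.getLast?_eq_some_getLast hne⟩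

namespace IsPhylo

lemma not_transGen_self (hM : M.IsPhylo X) (u : V) : ¬ Relation.TransGen M.arc u u := fun h =>
  let ⟨_, hreach, harc⟩ := Relation.TransGen.tail'_iff.mp h
  hM.acyclic harc hreach

lemma exists_mem_leaves_reach_s13 (hM : M.IsPhylo X) (hv : v ∈ M.verts) :
    ∃ x ∈ M.leaves, M.reach v x := by
  obtain ⟨x, hx, hvx, hsink⟩ := Relation.exists_reflTransGen_forall_not_of_finite hM.finite
    (fun _ _ h => (hM.arc_mem h).2) hM.not_transGen_self hv
  exact ⟨x, ⟨hx, by simp [outDeg, hsink]⟩, hvx⟩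

lemma root_reach (hM : M.IsPhylo X) (hv : v ∈ M.verts) : M.reach M.root v := by
  obtain ⟨r, hr, hrv, hsource⟩ := Relation.exists_reflTransGen_forall_not_of_finite hM.finite
    (r := flip M.arc) (fun _ _ h => (hM.arc_mem h).1)
    (fun u h => hM.not_transGen_self u (Relation.transGen_swap.mp h)) hv
  have : r = M.root := hM.root_unique r hr (by
    rw [inDeg, Set.eq_empty_of_forall_notMem (s := {u | M.arc u r}) hsource, Set.ncard_empty])
  exact this ▸ Relation.reflTransGen_swap.mp hrv

lemma finite_setOf_arc (hM : M.IsPhylo X) (v : V) : {u | M.arc u v}.Finite :=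
  hM.finite.subset fun _ hu => (hM.arc_mem hu).1

end IsPhylo

lemma IsTree.reach_or_reach_of_reach (hM : M.IsPhylo X) (ht : M.IsTree)
    (hu : M.reach u w) (hv : M.reach v w) : M.reach u v ∨ M.reach v u := by
  induction hu generalizing v with
  | refl => exact .inr hv
  | @tail b c hub hbc ih =>
    rcases hv.cases_tail with rfl | ⟨b', hvb', hb'c⟩
    · exact .inl (hub.tail hbc)
    · obtain rfl : b' = b := (Set.ncard_le_one_iff (hM.finite_setOf_arc c)).mp
        (ht c (hM.arc_mem hbc).2) hb'c hbc
      exact ih hvb'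

lemma IsTree.isHierarchy_cluster (hM : M.IsPhylo X) (ht : M.IsTree) (s : Set V) :
    IsHierarchy (M.cluster '' s) := by
  rintro _ ⟨u, -, rfl⟩ _ ⟨v, -, rfl⟩
  rcases Set.eq_empty_or_nonempty (M.cluster u ∩ M.cluster v) with hdisj | ⟨x, hxu, hxv⟩
  · exact .inl hdisj
  · rcases ht.reach_or_reach_of_reach hM hxu.2 hxv.2 with huv | hvu
    · exact .inr (.inr fun y hy => ⟨hy.1, huv.trans hy.2⟩)
    · exact .inr (.inl fun y hy => ⟨hy.1, hvu.trans hy.2⟩)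

lemma NoShortcuts.not_reach_of_arc_of_arc (hM : M.NoShortcuts) (hpv : M.arc p v)
    (hqv : M.arc q v) (hpq : p ≠ q) : ¬ M.reach p q := by
  intro hreach
  obtain ⟨l, hl⟩ := exists_isPathFrom_of_reach hreach
  have hlv : M.IsPathFrom p v (l ++ [v]) :=
    hl.append_tail (l' := [q, v]) ⟨List.isChain_pair.mpr hqv, rfl, rfl⟩
  exact hM p v hpv ⟨_, hlv, by simpa using hl.two_le_length hpq⟩

lemma Visible.reach_or_reach_of_cluster_subset (hM : M.IsPhylo X) (hp : M.Visible p)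
    (hq : q ∈ M.verts) (hsub : M.cluster p ⊆ M.cluster q) : M.reach p q ∨ M.reach q p := by
  obtain ⟨-, x, hx, hpx⟩ := hp
  obtain ⟨l₀, hl₀⟩ := exists_isPathFrom_of_reach (hM.root_reach hx.1)
  have hqx : M.reach q x := (hsub ⟨hx, (hl₀.reach_of_mem (hpx l₀ hl₀)).2⟩).2
  obtain ⟨l₁, hl₁⟩ := exists_isPathFrom_of_reach (hM.root_reach hq)
  obtain ⟨l₂, hl₂⟩ := exists_isPathFrom_of_reach hqx
  rcases List.mem_append.mp (hpx _ (hl₁.append_tail hl₂)) with hp₁ | hp₂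
  · exact .inl (hl₁.reach_of_mem hp₁).2
  · exact .inr (hl₂.reach_of_mem (List.mem_of_mem_tail hp₂)).1

lemma Normal.not_cluster_subset_of_arc_of_arc (hM : M.IsPhylo X) (hN : M.Normal)
    (hpv : M.arc p v) (hqv : M.arc q v) (hpq : p ≠ q) : ¬ M.cluster p ⊆ M.cluster q :=
  fun hsub =>
  (Visible.reach_or_reach_of_cluster_subset hM (hN.1 p (hM.arc_mem hpv).1) (hM.arc_mem hqv).1
    hsub).elim (hN.2.not_reach_of_arc_of_arc hpv hqv hpq)
    (hN.2.not_reach_of_arc_of_arc hqv hpv hpq.symm)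

lemma isTree_of_isHierarchy_cluster (hM : M.IsPhylo X) (hN : M.Normal)
    (hH : IsHierarchy (M.cluster '' M.verts)) : M.IsTree := by
  intro v hv
  by_contra! hdeg
  obtain ⟨p, hpv, q, hqv, hpq⟩ := (Set.one_lt_ncard (hM.finite_setOf_arc v)).mp hdeg
  obtain ⟨x, hx, hvx⟩ := hM.exists_mem_leaves_reach_s13 hv
  have hxpq : x ∈ M.cluster p ∩ M.cluster q :=
    ⟨⟨hx, .head hpv hvx⟩, ⟨hx, .head hqv hvx⟩⟩
  rcases hH _ ⟨p, (hM.arc_mem hpv).1, rfl⟩ _ ⟨q, (hM.arc_mem hqv).1, rfl⟩ with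
    hdisj | hsub | hsub
  · exact Set.eq_empty_iff_forall_notMem.mp hdisj x hxpq
  · exact hN.not_cluster_subset_of_arc_of_arc hM hpv hqv hpq hsub
  · exact hN.not_cluster_subset_of_arc_of_arc hM hqv hpv hpq.symm hsub

end Net

/-- A normal network `M` on `X` is a tree (every vertex has in-degree
at most 1) if and only if its collection of clusters forms a hierarchy on `X`. -/
theorem stmt13 {V : Type*} (M : Net V) (X : Set V) (hM : M.IsPhylo X)
    (hnormal : M.Normal) :
    M.IsTree ↔ IsHierarchy (M.cluster '' M.verts) :=
  ⟨fun ht => ht.isHierarchy_cluster hM _, Net.isTree_of_isHierarchy_cluster hM hnormal⟩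
end

section
/- The operations ⊕ and ⊗ on rooted phylogenetic networks satisfy the distributive law: for rooted phylogenetic networks M, M' with disjoint leaf sets and any rooted phylogenetic network N, (M ⊕ M') ⊗ N = (M ⊗ N) ⊕ (M' ⊗ N) (equality up to digraph isomorphism fixing each leaf). -/
/-!
Both sides consist of a new root, the non-leaf vertices of `M` and `M'`, and one copy of `N`
hanging from each leaf of `M` and of `M'`, so the evident relabelling is a bijection of vertices.
It matches arcs as well because the root of a phylogenetic network is never a leaf (it has
in-degree 0, a leaf in-degree 1): hence the arcs from the new root of `M ⊕ M'` to the roots of `M`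
and `M'` are kept by `⊗ N` instead of being replaced by arcs into copies of `N`.
-/

namespace Net

variable {V₁ V₂ V₃ : Type*}

theorem IsPhylo.root_notMem_leaves {V : Type*} {N : Net V} {X : Set V} (hN : N.IsPhylo X) :
    N.root ∉ N.leaves := by
  intro h
  have h1 := hN.leaf_inDeg N.root (hN.leaves_eq ▸ h)
  rw [hN.root_inDeg] at h1
  exact zero_ne_one h1

section Oplus

variable (N₁ : Net V₁) (N₂ : Net V₂)

@[simp]
theorem none_mem_verts_oplus : none ∈ (N₁.oplus N₂).verts := Set.mem_insert _ _

@[simp]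
theorem some_inl_mem_verts_oplus {v : V₁} :
    some (Sum.inl v) ∈ (N₁.oplus N₂).verts ↔ v ∈ N₁.verts := by
  simp [oplus]

@[simp]
theorem some_inr_mem_verts_oplus {v : V₂} :
    some (Sum.inr v) ∈ (N₁.oplus N₂).verts ↔ v ∈ N₂.verts := by
  simp [oplus]

@[simp]
theorem arc_oplus_none_none : ¬ (N₁.oplus N₂).arc none none := id

@[simp]
theorem arc_oplus_some_none {a : V₁ ⊕ V₂} : ¬ (N₁.oplus N₂).arc (some a) none := by
  rcases a with _ | _ <;> exact id

@[simp]
theorem arc_oplus_none_some_inl {w : V₁} :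
    (N₁.oplus N₂).arc none (some (Sum.inl w)) ↔ w = N₁.root := Iff.rfl

@[simp]
theorem arc_oplus_none_some_inr {w : V₂} :
    (N₁.oplus N₂).arc none (some (Sum.inr w)) ↔ w = N₂.root := Iff.rfl

@[simp]
theorem arc_oplus_some_inl_some_inl {u w : V₁} :
    (N₁.oplus N₂).arc (some (Sum.inl u)) (some (Sum.inl w)) ↔ N₁.arc u w := Iff.rfl

@[simp]
theorem arc_oplus_some_inr_some_inr {u w : V₂} :
    (N₁.oplus N₂).arc (some (Sum.inr u)) (some (Sum.inr w)) ↔ N₂.arc u w := Iff.rfl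

@[simp]
theorem arc_oplus_some_inl_some_inr {u : V₁} {w : V₂} :
    ¬ (N₁.oplus N₂).arc (some (Sum.inl u)) (some (Sum.inr w)) := id

@[simp]
theorem arc_oplus_some_inr_some_inl {u : V₂} {w : V₁} :
    ¬ (N₁.oplus N₂).arc (some (Sum.inr u)) (some (Sum.inl w)) := id

theorem outDeg_oplus_none : (N₁.oplus N₂).outDeg none = 2 := by
  have h : {b | (N₁.oplus N₂).arc none b} = {some (Sum.inl N₁.root), some (Sum.inr N₂.root)} := by
    ext (_ | _ | _) <;> simp
  rw [outDeg, h, Set.ncard_pair (by simp)]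

theorem outDeg_oplus_some_inl (v : V₁) :
    (N₁.oplus N₂).outDeg (some (Sum.inl v)) = N₁.outDeg v := by
  have h : {b | (N₁.oplus N₂).arc (some (Sum.inl v)) b}
      = (some ∘ Sum.inl) '' {w | N₁.arc v w} := by
    ext (_ | _ | _) <;> simp
  rw [outDeg, h, Set.ncard_image_of_injective _ (Option.some_injective _ |>.comp Sum.inl_injective)]
  rfl

theorem outDeg_oplus_some_inr (v : V₂) :
    (N₁.oplus N₂).outDeg (some (Sum.inr v)) = N₂.outDeg v := by
  have h : {b | (N₁.oplus N₂).arc (some (Sum.inr v)) b}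
      = (some ∘ Sum.inr) '' {w | N₂.arc v w} := by
    ext (_ | _ | _) <;> simp
  rw [outDeg, h, Set.ncard_image_of_injective _ (Option.some_injective _ |>.comp Sum.inr_injective)]
  rfl

@[simp]
theorem none_notMem_leaves_oplus : none ∉ (N₁.oplus N₂).leaves := by
  simp [leaves, outDeg_oplus_none]

@[simp]
theorem some_inl_mem_leaves_oplus {v : V₁} :
    some (Sum.inl v) ∈ (N₁.oplus N₂).leaves ↔ v ∈ N₁.leaves := by
  simp [leaves, outDeg_oplus_some_inl]

@[simp]
theorem some_inr_mem_leaves_oplus {v : V₂} :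
    some (Sum.inr v) ∈ (N₁.oplus N₂).leaves ↔ v ∈ N₂.leaves := by
  simp [leaves, outDeg_oplus_some_inr]

end Oplus

section Otimes

variable (N₁ : Net V₁) (N₂ : Net V₂)

@[simp]
theorem inl_mem_verts_otimes {u : V₁} :
    Sum.inl u ∈ (N₁.otimes N₂).verts ↔ u ∈ N₁.verts ∧ u ∉ N₁.leaves := by
  simp [otimes]

@[simp]
theorem inr_mem_verts_otimes {x : V₁} {y : V₂} :
    Sum.inr (x, y) ∈ (N₁.otimes N₂).verts ↔ x ∈ N₁.leaves ∧ y ∈ N₂.verts := by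
  simp [otimes]

@[simp]
theorem root_otimes : (N₁.otimes N₂).root = Sum.inl N₁.root := rfl

@[simp]
theorem arc_otimes_inl_inl {u w : V₁} :
    (N₁.otimes N₂).arc (Sum.inl u) (Sum.inl w) ↔ N₁.arc u w ∧ w ∉ N₁.leaves := Iff.rfl

@[simp]
theorem arc_otimes_inl_inr {u x : V₁} {y : V₂} :
    (N₁.otimes N₂).arc (Sum.inl u) (Sum.inr (x, y)) ↔
      x ∈ N₁.leaves ∧ N₁.arc u x ∧ y = N₂.root := Iff.rfl

@[simp]
theorem arc_otimes_inr_inl {x u : V₁} {y : V₂} :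
    ¬ (N₁.otimes N₂).arc (Sum.inr (x, y)) (Sum.inl u) := id

@[simp]
theorem arc_otimes_inr_inr {x x' : V₁} {y y' : V₂} :
    (N₁.otimes N₂).arc (Sum.inr (x, y)) (Sum.inr (x', y')) ↔
      x = x' ∧ x ∈ N₁.leaves ∧ N₂.arc y y' := Iff.rfl

end Otimes

/-- The pairs `(none, y)` are not vertices of the left-hand side; their image is arbitrary. -/
def distrib : Option (V₁ ⊕ V₂) ⊕ Option (V₁ ⊕ V₂) × V₃ → Option ((V₁ ⊕ V₁ × V₃) ⊕ (V₂ ⊕ V₂ × V₃))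
  | .inl none => none
  | .inl (some (.inl u)) => some (.inl (.inl u))
  | .inl (some (.inr u)) => some (.inr (.inl u))
  | .inr (none, _) => none
  | .inr (some (.inl x), y) => some (.inl (.inr (x, y)))
  | .inr (some (.inr x), y) => some (.inr (.inr (x, y)))

def undistrib : Option ((V₁ ⊕ V₁ × V₃) ⊕ (V₂ ⊕ V₂ × V₃)) → Option (V₁ ⊕ V₂) ⊕ Option (V₁ ⊕ V₂) × V₃
  | none => .inl none
  | some (.inl (.inl u)) => .inl (some (.inl u))
  | some (.inr (.inl u)) => .inl (some (.inr u))
  | some (.inl (.inr (x, y))) => .inr (some (.inl x), y)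
  | some (.inr (.inr (x, y))) => .inr (some (.inr x), y)

section Distrib

variable (M : Net V₁) (M' : Net V₂) (N : Net V₃)

theorem distrib_undistrib (b : Option ((V₁ ⊕ V₁ × V₃) ⊕ (V₂ ⊕ V₂ × V₃))) :
    distrib (undistrib b) = b := by
  rcases b with _ | ((_ | ⟨_, _⟩) | (_ | ⟨_, _⟩)) <;> rfl

theorem undistrib_distrib {a} (ha : a ∈ ((M.oplus M').otimes N).verts) :
    undistrib (distrib a) = a := by
  rcases a with (_ | _ | _) | ⟨_ | _ | _, _⟩ <;> simp_all [distrib, undistrib]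

theorem mapsTo_distrib :
    Set.MapsTo distrib ((M.oplus M').otimes N).verts ((M.otimes N).oplus (M'.otimes N)).verts := by
  rintro ((_ | _ | _) | ⟨_ | _ | _, _⟩) ha <;> simp_all [distrib]

theorem mapsTo_undistrib :
    Set.MapsTo undistrib ((M.otimes N).oplus (M'.otimes N)).verts
      ((M.oplus M').otimes N).verts := by
  rintro (_ | (_ | ⟨_, _⟩) | (_ | ⟨_, _⟩)) hb <;> simp_all [undistrib]

theorem bijOn_distrib :
    Set.BijOn distrib ((M.oplus M').otimes N).verts ((M.otimes N).oplus (M'.otimes N)).verts :=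
  Set.InvOn.bijOn ⟨fun _ ha => undistrib_distrib M M' N ha, fun b _ => distrib_undistrib b⟩
    (mapsTo_distrib M M' N) (mapsTo_undistrib M M' N)

theorem arc_distrib_iff (hM : M.root ∉ M.leaves) (hM' : M'.root ∉ M'.leaves)
    {a b} (ha : a ∈ ((M.oplus M').otimes N).verts) (hb : b ∈ ((M.oplus M').otimes N).verts) :
    ((M.oplus M').otimes N).arc a b ↔
      ((M.otimes N).oplus (M'.otimes N)).arc (distrib a) (distrib b) := by
  rcases a with (_ | _ | _) | ⟨_ | _ | _, _⟩ <;> rcases b with (_ | _ | _) | ⟨_ | _ | _, _⟩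
  all_goals simp_all [distrib]
  -- left: arcs from the new root into a copy of `N` at a leaf equal to `M.root` or `M'.root`
  all_goals rintro rfl; simp_all

theorem netEquiv_distrib (hM : M.root ∉ M.leaves) (hM' : M'.root ∉ M'.leaves) :
    NetEquiv ((M.oplus M').otimes N) ((M.otimes N).oplus (M'.otimes N)) distrib :=
  ⟨bijOn_distrib M M' N, fun _ ha _ hb => arc_distrib_iff M M' N hM hM' ha hb⟩

end Distrib

end Net

theorem stmt17_general {V₁ V₂ V₃ : Type*} (M : Net V₁) (M' : Net V₂) (N : Net V₃)
    (X₁ : Set V₁) (X₂ : Set V₂) (X₃ : Set V₃)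
    (hM : M.IsPhylo X₁) (hM' : M'.IsPhylo X₂) :
    ∃ f, Net.NetEquiv ((M.oplus M').otimes N) ((M.otimes N).oplus (M'.otimes N)) f ∧
      (∀ x ∈ X₁, ∀ y ∈ X₃,
        f (Sum.inr (some (Sum.inl x), y)) = some (Sum.inl (Sum.inr (x, y)))) ∧
      (∀ x ∈ X₂, ∀ y ∈ X₃,
        f (Sum.inr (some (Sum.inr x), y)) = some (Sum.inr (Sum.inr (x, y)))) :=
  ⟨Net.distrib, Net.netEquiv_distrib M M' N hM.root_notMem_leaves hM'.root_notMem_leaves,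
    fun _ _ _ _ => rfl, fun _ _ _ _ => rfl⟩

/-- Distributivity: `(M ⊕ M') ⊗ N = (M ⊗ N) ⊕ (M' ⊗ N)`, up to a
digraph isomorphism mapping each leaf of the left-hand network to the corresponding
leaf of the right-hand network. -/
theorem stmt17 {V₁ V₂ V₃ : Type*} (M : Net V₁) (M' : Net V₂) (N : Net V₃)
    (X₁ : Set V₁) (X₂ : Set V₂) (X₃ : Set V₃)
    (hM : M.IsPhylo X₁) (hM' : M'.IsPhylo X₂) (hN : N.IsPhylo X₃) :
    ∃ f, Net.NetEquiv ((M.oplus M').otimes N) ((M.otimes N).oplus (M'.otimes N)) f ∧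
      (∀ x ∈ X₁, ∀ y ∈ X₃,
        f (Sum.inr (some (Sum.inl x), y)) = some (Sum.inl (Sum.inr (x, y)))) ∧
      (∀ x ∈ X₂, ∀ y ∈ X₃,
        f (Sum.inr (some (Sum.inr x), y)) = some (Sum.inr (Sum.inr (x, y)))) :=
  stmt17_general M M' N X₁ X₂ X₃ hM hM'
end
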